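/- There is no real constant c such that Z(L(G)) ≤ c · b(G) holds for all graphs G. -/

import Mathlib

open scoped BigOperators

namespace Paper

variable {V : Type*}

/-- The zero-forcing closure: vertices that eventually become black starting from `S`. -/
inductive ZFClosure (G : SimpleGraph V) (S : Set V) : V → Prop
  | init {v : V} : v ∈ S → ZFClosure G S v
  | force {v w : V} : ZFClosure G S v → G.Adj v w →
      (∀ u, G.Adj v u → u ≠ w → ZFClosure G S u) → ZFClosure G S w

/-- `S` is a zero-forcing set of `G`. -/
def IsZeroForcingSet (G : SimpleGraph V) (S : Set V) : Prop :=
  ∀ v : V, ZFClosure G S v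

/-- The zero-forcing number `Z(G)`. -/
noncomputable def zfNumber (G : SimpleGraph V) : ℕ :=
  sInf {n | ∃ S : Set V, IsZeroForcingSet G S ∧ S.ncard = n}

/-- A state of the brushing process: the set of vertices that have fired (and hence
are clean), the set of dirty edges, and the number of brushes at each vertex. -/
structure BrushConfig (V : Type*) where
  fired : Set V
  dirty : Set (Sym2 V)
  brushes : V → ℕ

open Classical in
def BrushStep (G : SimpleGraph V) (restricted : Bool) (c c' : BrushConfig V) : Prop :=
  ∃ (v : V) (f : Sym2 V → ℕ),
    v ∉ c.fired ∧
    (∀ e ∈ c.dirty, v ∈ e → if restricted then f e = 1 else 1 ≤ f e) ∧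
    (∑ᶠ e ∈ {e ∈ c.dirty | v ∈ e}, f e) ≤ c.brushes v ∧
    c'.fired = insert v c.fired ∧
    c'.dirty = {e ∈ c.dirty | v ∉ e} ∧
    ∀ w : V, c'.brushes w =
      (if w = v then 0 else c.brushes w) + c.dirty.indicator f s(v, w)

/-- The initial brush configuration `ω` cleans the graph `G`:  starting with every vertex
and every edge dirty, some sequence of firings results in every vertex having fired. -/
def Cleans (G : SimpleGraph V) (restricted : Bool) (ω : V → ℕ) : Prop :=
  ∃ c : BrushConfig V,
    Relation.ReflTransGen (BrushStep G restricted) ⟨∅, G.edgeSet, ω⟩ c ∧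
    c.fired = Set.univ

/-- The brushing number `B(G)` (several brushes may traverse a single edge). -/
noncomputable def brushNumber (G : SimpleGraph V) : ℕ :=
  sInf {n | ∃ ω : V → ℕ, Cleans G false ω ∧ ∑ᶠ v, ω v = n}

/-- The restricted brushing number `b(G)` (each edge is traversed by exactly one brush). -/
noncomputable def brushNumber' (G : SimpleGraph V) : ℕ :=
  sInf {n | ∃ ω : V → ℕ, Cleans G true ω ∧ ∑ᶠ v, ω v = n}

/-!
Take the chain of `k` triangles `{2i, 2i+1, 2i+2}`. Putting two brushes on vertex `0` and firing
the vertices in increasing order cleans it, since every later vertex receives from earlier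
neighbours at least as many brushes as it has later neighbours; so `b ≤ 2`. In the line graph
the edge sets of the `k` triangles are pairwise disjoint forts (an edge leaving a triangle at `v`
is adjacent to both triangle edges at `v`), and every zero-forcing set meets every fort, so
`Z(L(G)) ≥ k`.
-/

/-- A fort: no vertex outside `F` can ever force a vertex of `F`. -/
def IsFort (G : SimpleGraph V) (F : Set V) : Prop :=
  F.Nonempty ∧ ∀ v ∉ F, ∀ w ∈ F, G.Adj v w → ∃ u ∈ F, G.Adj v u ∧ u ≠ w

theorem ZFClosure.notMem_of_isFort {G : SimpleGraph V} {S F : Set V} (hF : IsFort G F)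
    (hSF : Disjoint S F) {v : V} (hv : ZFClosure G S v) : v ∉ F := by
  induction hv with
  | init hS => exact Set.disjoint_left.1 hSF hS
  | @force v w _ hvw _ hv hothers =>
    intro hw
    obtain ⟨u, hu, hvu, huw⟩ := hF.2 v hv w hw hvw
    exact hothers u hvu huw hu

theorem IsFort.inter_nonempty {G : SimpleGraph V} {S F : Set V} (hF : IsFort G F)
    (hS : IsZeroForcingSet G S) : (S ∩ F).Nonempty := by
  rw [← Set.not_disjoint_iff_nonempty_inter]
  intro hSF
  obtain ⟨w, hw⟩ := hF.1
  exact (hS w).notMem_of_isFort hF hSF hw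

theorem exists_isZeroForcingSet_ncard_eq_zfNumber (G : SimpleGraph V) :
    ∃ S : Set V, IsZeroForcingSet G S ∧ S.ncard = zfNumber G := by
  have hne : {n | ∃ S : Set V, IsZeroForcingSet G S ∧ S.ncard = n}.Nonempty :=
    ⟨_, Set.univ, fun _ => ZFClosure.init (Set.mem_univ _), rfl⟩
  exact Nat.sInf_mem hne

theorem card_le_zfNumber_of_isFort [Finite V] {G : SimpleGraph V} {ι : Type*}
    {F : ι → Set V} (hF : ∀ i, IsFort G (F i))
    (hdisj : Pairwise fun i j => Disjoint (F i) (F j)) :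
    Nat.card ι ≤ zfNumber G := by
  obtain ⟨S, hS, hcard⟩ := exists_isZeroForcingSet_ncard_eq_zfNumber G
  choose x hxS hxF using fun i => (hF i).inter_nonempty hS
  rw [← hcard, ← Nat.card_coe_set_eq]
  refine Nat.card_le_card_of_injective (fun i => ⟨x i, hxS i⟩) fun i j hij => ?_
  by_contra hne
  have hxij : x i = x j := congrArg Subtype.val hij
  exact Set.disjoint_left.1 (hdisj hne) (hxF i) (hxij ▸ hxF j)

def edgesWithin (G : SimpleGraph V) (W : Set V) : Set G.edgeSet :=
  {e | ∀ x ∈ (e : Sym2 V), x ∈ W}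

theorem mk_mem_edgesWithin {G : SimpleGraph V} {W : Set V} {a b : V} (h : G.Adj a b) :
    (⟨s(a, b), h⟩ : G.edgeSet) ∈ edgesWithin G W ↔ a ∈ W ∧ b ∈ W := by
  simp [edgesWithin]

theorem isFort_lineGraph_edgesWithin {G : SimpleGraph V} {W : Set V} (hW : W.Nonempty)
    (hdeg : ∀ v ∈ W, ∃ a ∈ W, ∃ b ∈ W, a ≠ b ∧ G.Adj v a ∧ G.Adj v b) :
    IsFort G.lineGraph (edgesWithin G W) := by
  constructor
  · obtain ⟨v, hv⟩ := hW
    obtain ⟨a, ha, -, -, -, hva, -⟩ := hdeg v hv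
    exact ⟨⟨s(v, a), hva⟩, (mk_mem_edgesWithin hva).2 ⟨hv, ha⟩⟩
  intro e he f hf hef
  obtain ⟨-, v, hve, hvf⟩ := SimpleGraph.lineGraph_adj_iff_exists.1 hef
  obtain ⟨a, ha, b, hb, hab, hva, hvb⟩ := hdeg v (hf v hvf)
  -- `e` leaves `W` and meets it at `v`, so it is adjacent to both edges `va` and `vb`.
  have hadj : ∀ {c} (hvc : G.Adj v c), c ∈ W →
      G.lineGraph.Adj e ⟨s(v, c), hvc⟩ ∧
        (⟨s(v, c), hvc⟩ : G.edgeSet) ∈ edgesWithin G W :=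
    fun hvc hc =>
      have hmem := (mk_mem_edgesWithin hvc).2 ⟨hf v hvf, hc⟩
      ⟨SimpleGraph.lineGraph_adj_iff_exists.2
        ⟨fun h => he (h ▸ hmem), v, hve, Sym2.mem_mk_left _ _⟩, hmem⟩
  by_cases haf : (⟨s(v, a), hva⟩ : G.edgeSet) = f
  · refine ⟨_, (hadj hvb hb).2, (hadj hvb hb).1, fun hbf => hab ?_⟩
    exact Sym2.congr_right.1 (congrArg Subtype.val (haf.trans hbf.symm))
  · exact ⟨_, (hadj hva ha).2, (hadj hva ha).1, haf⟩

theorem disjoint_edgesWithin {G : SimpleGraph V} {W W' : Set V}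
    (h : (W ∩ W').Subsingleton) : Disjoint (edgesWithin G W) (edgesWithin G W') := by
  refine Set.disjoint_left.2 fun ⟨e, he⟩ hW hW' => ?_
  induction e using Sym2.ind with
  | h a b =>
    obtain ⟨haW, hbW⟩ := (mk_mem_edgesWithin he).1 hW
    obtain ⟨haW', hbW'⟩ := (mk_mem_edgesWithin he).1 hW'
    exact G.ne_of_adj he (h ⟨haW, haW'⟩ ⟨hbW, hbW'⟩)

theorem isFort_lineGraph_edgesWithin_triangle {G : SimpleGraph V} {a b c : V}
    (hab : G.Adj a b) (hac : G.Adj a c) (hbc : G.Adj b c) :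
    IsFort G.lineGraph (edgesWithin G {a, b, c}) := by
  refine isFort_lineGraph_edgesWithin ⟨a, by simp⟩ ?_
  rintro v (rfl | rfl | rfl)
  · exact ⟨b, by simp, c, by simp, hbc.ne, hab, hac⟩
  · exact ⟨a, by simp, c, by simp, hac.ne, hab.symm, hbc⟩
  · exact ⟨a, by simp, b, by simp, hab.ne, hac.symm, hbc.symm⟩

section OrderedFiring

variable {n : ℕ} {G : SimpleGraph (Fin n)} {ω : Fin n → ℕ}

variable (G ω) in
/-- The state after the vertices `0, …, j - 1` have fired in this order, each sending one
brush along every edge to a later vertex and discarding the rest. -/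
noncomputable def orderedFiringConfig (j : ℕ) : BrushConfig (Fin n) where
  fired := {v | v.val < j}
  dirty := {e ∈ G.edgeSet | ∀ x ∈ e, j ≤ x.val}
  brushes w := if w.val < j then 0 else ω w + {u | G.Adj u w ∧ u.val < j}.ncard

theorem mk_mem_orderedFiringConfig_dirty {j : ℕ} {a b : Fin n} :
    s(a, b) ∈ (orderedFiringConfig G ω j).dirty ↔
      G.Adj a b ∧ j ≤ a.val ∧ j ≤ b.val := by
  simp [orderedFiringConfig]

theorem incident_orderedFiringConfig_dirty (v : Fin n) :
    {e ∈ (orderedFiringConfig G ω v.val).dirty | v ∈ e} =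
      (fun u => s(v, u)) '' {u | G.Adj v u ∧ v < u} := by
  ext e
  constructor
  · rintro ⟨he, hve⟩
    obtain ⟨u, rfl⟩ := Sym2.mem_iff_exists.1 hve
    obtain ⟨hvu, -, hle⟩ := mk_mem_orderedFiringConfig_dirty.1 he
    exact ⟨u, ⟨hvu, lt_of_le_of_ne hle (G.ne_of_adj hvu)⟩, rfl⟩
  · rintro ⟨u, ⟨hvu, hlt⟩, rfl⟩
    exact ⟨mk_mem_orderedFiringConfig_dirty.2 ⟨hvu, le_rfl, hlt.le⟩, Sym2.mem_mk_left _ _⟩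

open Classical in
theorem ncard_adj_val_lt_succ (v w : Fin n) :
    {u | G.Adj u w ∧ u.val < v.val + 1}.ncard =
      {u | G.Adj u w ∧ u.val < v.val}.ncard + if G.Adj v w then 1 else 0 := by
  split_ifs with hvw
  · rw [← Set.ncard_insert_of_notMem (fun h => (lt_irrefl _ h.2))]
    congr 1
    ext u
    simp only [Set.mem_ofPred_eq, Set.mem_insert_iff, Fin.ext_iff]
    constructor
    · rintro ⟨hu, hlt⟩
      rcases Nat.lt_succ_iff_lt_or_eq.1 hlt with hlt | heq
      · exact Or.inr ⟨hu, hlt⟩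
      · exact Or.inl heq
    · rintro (heq | ⟨hu, hlt⟩)
      · exact ⟨Fin.ext heq ▸ hvw, heq.le.trans_lt (Nat.lt_succ_self _)⟩
      · exact ⟨hu, hlt.trans (Nat.lt_succ_self _)⟩
  · congr 1
    ext u
    simp only [Set.mem_ofPred_eq]
    refine ⟨fun ⟨hu, hlt⟩ => ⟨hu, ?_⟩,
      fun ⟨hu, hlt⟩ => ⟨hu, hlt.trans (Nat.lt_succ_self _)⟩⟩
    rcases Nat.lt_succ_iff_lt_or_eq.1 hlt with hlt | heq
    · exact hlt
    · exact absurd (Fin.ext heq ▸ hu) hvw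

theorem brushStep_orderedFiringConfig (v : Fin n)
    (hv : {u | G.Adj v u ∧ v < u}.ncard ≤ ω v + {u | G.Adj u v ∧ u < v}.ncard) :
    BrushStep G true (orderedFiringConfig G ω v.val) (orderedFiringConfig G ω (v.val + 1)) := by
  refine ⟨v, fun _ => 1, by simp [orderedFiringConfig], fun _ _ _ => by simp, ?_, ?_, ?_, ?_⟩
  · rw [finsum_one, incident_orderedFiringConfig_dirty,
      Set.ncard_image_of_injective _ fun _ _ h => Sym2.congr_right.1 h]
    simpa [orderedFiringConfig] using hv
  · ext w
    simp only [orderedFiringConfig, Set.mem_insert_iff, Set.mem_ofPred_eq, Fin.ext_iff]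
    omega
  · ext e
    induction e using Sym2.ind with
    | h a b =>
      simp only [Set.mem_sep_iff, mk_mem_orderedFiringConfig_dirty, Sym2.mem_iff, Fin.ext_iff,
        and_assoc]
      exact and_congr_right fun _ => by omega
  · intro w
    classical
    rw [Set.indicator_apply, mk_mem_orderedFiringConfig_dirty]
    dsimp only [orderedFiringConfig]
    rcases lt_or_ge w.val (v.val + 1) with hwv | hvw
    · have hnadj : ¬ (G.Adj v w ∧ v.val ≤ v.val ∧ v.val ≤ w.val) := fun ⟨h, _, hle⟩ =>
        G.ne_of_adj h (Fin.ext (by omega))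
      rw [if_pos hwv, if_neg hnadj]
      split_ifs <;> omega
    · have hwv : w ≠ v := fun h => by rw [h] at hvw; omega
      rw [if_neg (by omega), if_neg hwv, if_neg (by omega), ncard_adj_val_lt_succ, add_assoc]
      simp [Fin.le_iff_val_le_val.2 (Nat.le_of_succ_le hvw)]

theorem cleans_restricted_of_ncard_le
    (h : ∀ v, {u | G.Adj v u ∧ v < u}.ncard ≤ ω v + {u | G.Adj u v ∧ u < v}.ncard) :
    Cleans G true ω := by
  refine ⟨orderedFiringConfig G ω n, ?_, by ext v; simp [orderedFiringConfig]⟩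
  have hstart : (⟨∅, G.edgeSet, ω⟩ : BrushConfig (Fin n)) = orderedFiringConfig G ω 0 := by
    simp [orderedFiringConfig]
  have hreach : ∀ j ≤ n, Relation.ReflTransGen (BrushStep G true)
      (orderedFiringConfig G ω 0) (orderedFiringConfig G ω j) := by
    intro j hj
    induction j with
    | zero => exact .refl
    | succ j ih => exact (ih (by omega)).tail (brushStep_orderedFiringConfig ⟨j, hj⟩ (h _))
  exact hstart ▸ hreach n le_rfl

end OrderedFiring

/-- `k` triangles `{2i, 2i+1, 2i+2}` in a chain, consecutive ones sharing a vertex. -/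
def triangleChain (k : ℕ) : SimpleGraph (Fin (2 * k + 1)) :=
  SimpleGraph.fromRel fun x y => y.val = x.val + 1 ∨ (x.val % 2 = 0 ∧ y.val = x.val + 2)

theorem triangleChain_adj {k : ℕ} {x y : Fin (2 * k + 1)} :
    (triangleChain k).Adj x y ↔ y.val = x.val + 1 ∨ x.val = y.val + 1 ∨
      (x.val % 2 = 0 ∧ y.val = x.val + 2) ∨ (y.val % 2 = 0 ∧ x.val = y.val + 2) := by
  simp only [triangleChain, SimpleGraph.fromRel_adj, ne_eq, Fin.ext_iff]
  omega

def chainTriangle {k : ℕ} (i : Fin k) : Set (Fin (2 * k + 1)) :=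
  {⟨2 * i, by omega⟩, ⟨2 * i + 1, by omega⟩, ⟨2 * i + 2, by omega⟩}

theorem isFort_lineGraph_triangleChain {k : ℕ} (i : Fin k) :
    IsFort (triangleChain k).lineGraph (edgesWithin _ (chainTriangle i)) :=
  isFort_lineGraph_edgesWithin_triangle (triangleChain_adj.2 (by simp))
    (triangleChain_adj.2 (by simp)) (triangleChain_adj.2 (by simp))

theorem chainTriangle_inter_subsingleton {k : ℕ} {i j : Fin k} (hij : i ≠ j) :
    (chainTriangle i ∩ chainTriangle j).Subsingleton := by
  have hij' := Fin.val_ne_of_ne hij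
  rintro x ⟨hxi, hxj⟩ y ⟨hyi, hyj⟩
  simp only [chainTriangle, Set.mem_insert_iff, Set.mem_singleton_iff, Fin.ext_iff] at *
  omega

theorem le_zfNumber_lineGraph_triangleChain (k : ℕ) :
    k ≤ zfNumber (triangleChain k).lineGraph := by
  simpa using card_le_zfNumber_of_isFort isFort_lineGraph_triangleChain
    fun _ _ hij => disjoint_edgesWithin (chainTriangle_inter_subsingleton hij)

theorem ncard_triangleChain_adj_lt_le {k : ℕ} (v : Fin (2 * k + 1)) :
    {u | (triangleChain k).Adj v u ∧ v < u}.ncard ≤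
      (Pi.single 0 2 : Fin (2 * k + 1) → ℕ) v +
        {u | (triangleChain k).Adj u v ∧ u < v}.ncard := by
  rcases eq_or_ne v 0 with rfl | hv
  · calc _ ≤ ({1, 2} : Set ℕ).ncard := by
          refine Set.ncard_le_ncard_of_injOn Fin.val (fun u ⟨hadj, _⟩ => ?_)
            Fin.val_injective.injOn
          rw [triangleChain_adj] at hadj
          simp only [Fin.val_zero, Set.mem_insert_iff, Set.mem_singleton_iff] at hadj ⊢
          omega
      _ = 2 := Set.ncard_pair (by decide)
      _ ≤ _ := by simp
  -- the reflection `u ↦ 2v - u` maps later neighbours of `v` to earlier ones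
  have hv : v.val ≠ 0 := Fin.val_ne_of_ne hv
  calc _ ≤ (Fin.val '' {u | (triangleChain k).Adj u v ∧ u < v}).ncard := by
        refine Set.ncard_le_ncard_of_injOn (fun u => 2 * v.val - u.val)
          (fun u ⟨hadj, hlt⟩ => ?_) (fun u ⟨hadj, hlt⟩ w ⟨hadj', hlt'⟩ huw => ?_)
        · rw [triangleChain_adj, Fin.lt_def] at *
          refine ⟨⟨2 * v.val - u.val, by omega⟩, ⟨triangleChain_adj.2 ?_, ?_⟩, rfl⟩
          all_goals simp only [Fin.lt_def]; omega
        · rw [triangleChain_adj, Fin.lt_def] at *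
          simp only at huw
          ext; omega
    _ = _ := Set.ncard_image_of_injective _ Fin.val_injective
    _ ≤ _ := Nat.le_add_left _ _

theorem brushNumber'_triangleChain_le (k : ℕ) : brushNumber' (triangleChain k) ≤ 2 := by
  refine Nat.sInf_le
    ⟨Pi.single 0 2, cleans_restricted_of_ncard_le ncard_triangleChain_adj_lt_le, ?_⟩
  exact (finsum_eq_single _ 0 fun v hv => Pi.single_eq_of_ne hv 2).trans (by simp)

theorem no_constant_zfNumber_lineGraph_le_mul_brushNumber' :
    ¬ ∃ c : ℝ, ∀ (V : Type) (_ : Fintype V) (G : SimpleGraph V),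
      (zfNumber G.lineGraph : ℝ) ≤ c * (brushNumber' G : ℝ) := by
  rintro ⟨c, hc⟩
  obtain ⟨k, hk⟩ := exists_nat_gt (2 * |c|)
  have hZ : (k : ℝ) ≤ zfNumber (triangleChain k).lineGraph := by
    exact_mod_cast le_zfNumber_lineGraph_triangleChain k
  have hb : (brushNumber' (triangleChain k) : ℝ) ≤ 2 := by
    exact_mod_cast brushNumber'_triangleChain_le k
  have hcb : c * brushNumber' (triangleChain k) ≤ 2 * |c| := calc
    _ ≤ |c| * brushNumber' (triangleChain k) :=
      mul_le_mul_of_nonneg_right (le_abs_self c) (Nat.cast_nonneg _)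
    _ ≤ |c| * 2 := mul_le_mul_of_nonneg_left hb (abs_nonneg c)
    _ = 2 * |c| := mul_comm _ _
  linarith [hc _ inferInstance (triangleChain k)]

end Paper
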